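/- (Translation invariance) For every horizon m ≥ 0, every μ ∈ ℝ, every n > 0, every λ ∈ ℝ and every c ∈ ℝ, the Gaussian one-armed-bandit value function satisfies V_m(μ,n,γ,τ,λ) = V_m(μ − c, n, γ, τ, λ − c). -/

import Mathlib

open MeasureTheory ProbabilityTheory

/-- Finite-horizon value function of the Gaussian one-armed bandit:
`V γ τ m μ n λ`, with discount `γ`, observation precision `τ`, horizon `m`,
posterior state `(μ, n)` and safe-arm reward `λ`. The expectation over the
next observation is taken under the Gaussian predictive distribution
`𝒩(μ, 1/n + 1/τ)`. -/
noncomputable def V (γ τ : ℝ) : ℕ → ℝ → ℝ → ℝ → ℝ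
  | 0, μ, _n, lam => max (μ - lam) 0 / (1 - γ)
  | m + 1, μ, n, lam =>
      max (μ - lam + γ * ∫ y, V γ τ m ((n * μ + τ * y) / (n + τ)) (n + τ) lam
        ∂(gaussianReal μ (1 / n + 1 / τ).toNNReal)) 0

/-! Shifting every quantity by `c` shifts the posterior mean by `c` and the predictive Gaussian by
`c`, while the payoff `μ - λ` only sees differences; so the Bellman recursion commutes with the
shift, by induction on the horizon. -/

lemma integral_gaussianReal_sub_const {E : Type*} [NormedAddCommGroup E] [NormedSpace ℝ E]
    (f : ℝ → E) (μ c : ℝ) (v : NNReal) :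
    ∫ y, f y ∂gaussianReal (μ - c) v = ∫ y, f (y - c) ∂gaussianReal μ v := by
  rw [← gaussianReal_map_sub_const]
  exact integral_map_equiv (MeasurableEquiv.subRight c) f

lemma weightedMean_sub_const {n τ : ℝ} (h : n + τ ≠ 0) (μ y c : ℝ) :
    (n * (μ - c) + τ * (y - c)) / (n + τ) = (n * μ + τ * y) / (n + τ) - c := by
  field_simp
  ring

theorem nmab_translation_invariance_general (γ τ : ℝ)
    (hτ : 0 < τ) :
    ∀ m : ℕ, ∀ μ n lam c : ℝ, 0 < n →
      V γ τ m μ n lam = V γ τ m (μ - c) n (lam - c) := by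
  intro m
  induction m with
  | zero =>
    intro μ n lam c _
    simp only [V, sub_sub_sub_cancel_right]
  | succ m ih =>
    intro μ n lam c hn
    have hnτ : 0 < n + τ := add_pos hn hτ
    simp only [V, sub_sub_sub_cancel_right, integral_gaussianReal_sub_const,
      weightedMean_sub_const hnτ.ne', ← ih _ _ lam c hnτ]

/-- Translation invariance: `V_m(μ,n,γ,τ,λ) = V_m(μ − c, n, γ, τ, λ − c)`. -/
theorem nmab_translation_invariance (γ τ : ℝ)
    (hγ0 : 0 ≤ γ) (hγ1 : γ < 1) (hτ : 0 < τ) :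
    ∀ m : ℕ, ∀ μ n lam c : ℝ, 0 < n →
      V γ τ m μ n lam = V γ τ m (μ - c) n (lam - c) :=
  nmab_translation_invariance_general γ τ hτ
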